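/- arXiv:1611.00726 — 2 statements merged into one kernel-verified Lean document; each statement's English description precedes it below -/
import Mathlib

section
/- Let z̄ be a complex number with positive imaginary part and z̄ ≠ i. Let Z be the 2×2 complex symmetric matrix with diagonal entries (z̄²−1)/(2z̄) and off-diagonal entries ±(z̄²+1)/(2z̄) (both off-diagonal entries equal, with either sign). If R is a real 2×2 diagonal matrix satisfying Z R Z = −R, then R = diag(τ, −τ) for some real τ. -/
open Matrix Complex

/-!
Write `Z = !![a, b; b, a]`. Adding the two diagonal entries of `Z R Z = -R` gives
`(a² + b² + 1)(τ₁ + τ₂) = 0`. For the given entries `a² - b² = -1`, so the first factor is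
`2 b²`, and `b = ±(z̄² + 1)/(2z̄)` vanishes only at `z̄ = ±i`, both excluded in the upper half-plane
minus `i`.
-/

theorem Matrix.add_mul_add_eq_zero_of_symm_mul_diag_mul_eq_neg {R : Type*} [CommRing R]
    {a b t₁ t₂ : R}
    (h : !![a, b; b, a] * !![t₁, 0; 0, t₂] * !![a, b; b, a] = -!![t₁, 0; 0, t₂]) :
    (a ^ 2 + b ^ 2 + 1) * (t₁ + t₂) = 0 := by
  have h₀₀ := congrFun (congrFun h 0) 0
  have h₁₁ := congrFun (congrFun h 1) 1
  simp only [mul_fin_two, of_apply, cons_val', cons_val_zero, cons_val_one, empty_val',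
    cons_val_fin_one, neg_apply] at h₀₀ h₁₁
  linear_combination h₀₀ + h₁₁

theorem Matrix.add_eq_zero_of_symm_mul_diag_mul_eq_neg {K : Type*} [Field K] [NeZero (2 : K)]
    {a b t₁ t₂ : K} (hab : a ^ 2 - b ^ 2 = -1) (hb : b ≠ 0)
    (h : !![a, b; b, a] * !![t₁, 0; 0, t₂] * !![a, b; b, a] = -!![t₁, 0; 0, t₂]) :
    t₁ + t₂ = 0 := by
  have hsum := add_mul_add_eq_zero_of_symm_mul_diag_mul_eq_neg h
  have hfactor : a ^ 2 + b ^ 2 + 1 = 2 * b ^ 2 := by linear_combination hab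
  rw [hfactor] at hsum
  exact (mul_eq_zero.mp hsum).resolve_left (mul_ne_zero two_ne_zero (pow_ne_zero 2 hb))

theorem Complex.sq_add_one_ne_zero_of_im_pos_of_ne_I {z : ℂ} (hIm : 0 < z.im) (hz : z ≠ I) :
    z ^ 2 + 1 ≠ 0 := by
  intro h
  have : (z - I) * (z + I) = 0 := by linear_combination h - I_sq
  rcases mul_eq_zero.mp this with h | h
  · exact hz (sub_eq_zero.mp h)
  · have : z.im = -1 := by simpa using congrArg Complex.im (eq_neg_of_add_eq_zero_left h)
    linarith

theorem div_two_mul_sq_sub_sq_eq_neg_one {K : Type*} [Field K] [NeZero (2 : K)] {z ε : K}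
    (hz : z ≠ 0) (hε : ε ^ 2 = 1) :
    ((z ^ 2 - 1) / (2 * z)) ^ 2 - (ε * ((z ^ 2 + 1) / (2 * z))) ^ 2 = -1 := by
  field_simp
  linear_combination -(z ^ 2 + 1) ^ 2 * hε

theorem stmt_0 (z : ℂ) (hIm : 0 < z.im) (hz : z ≠ Complex.I)
    (ε : ℂ) (hε : ε = 1 ∨ ε = -1) (τ₁ τ₂ : ℝ)
    (Z : Matrix (Fin 2) (Fin 2) ℂ)
    (hZ : Z = !![(z ^ 2 - 1) / (2 * z), ε * ((z ^ 2 + 1) / (2 * z));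
                 ε * ((z ^ 2 + 1) / (2 * z)), (z ^ 2 - 1) / (2 * z)])
    (R : Matrix (Fin 2) (Fin 2) ℂ)
    (hR : R = !![(τ₁ : ℂ), 0; 0, (τ₂ : ℂ)])
    (h : Z * R * Z = -R) :
    τ₁ = -τ₂ := by
  have hz0 : z ≠ 0 := by rintro rfl; simp at hIm
  have hε_sq : ε ^ 2 = 1 := by rcases hε with rfl | rfl <;> norm_num
  have hε0 : ε ≠ 0 := by rintro rfl; simp at hε_sq
  have hb : ε * ((z ^ 2 + 1) / (2 * z)) ≠ 0 := mul_ne_zero hε0 <|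
    div_ne_zero (sq_add_one_ne_zero_of_im_pos_of_ne_I hIm hz) (mul_ne_zero two_ne_zero hz0)
  subst hZ hR
  have hsum :=
    add_eq_zero_of_symm_mul_diag_mul_eq_neg (div_two_mul_sq_sub_sq_eq_neg_one hz0 hε_sq) hb h
  exact_mod_cast eq_neg_of_add_eq_zero_left hsum
end

section
/- Let A = [[0, b₂ᵀ],[b₁, A₂₂]] be an n×n complex matrix in block form with A₂₂ of size (n−1)×(n−1) and b₁, b₂ ∈ ℂⁿ⁻¹, and let B = (τ, 0, …, 0)ᵀ ∈ ℂⁿ with τ ≠ 0. If (A₂₂, b₁) is controllable, then (A, B) is controllable. -/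
open Matrix

lemma span_top_of_rank {k : ℕ} (M : Matrix (Fin k) (Fin k) ℂ) (h : M.rank = k) :
    Submodule.span ℂ (Set.range Mᵀ) = ⊤ := by
  apply Submodule.eq_top_of_finrank_eq
  exact (Matrix.rank_eq_finrank_span_cols M).symm.trans (h.trans (Module.finrank_fin_fun ℂ).symm)

lemma rank_of_span_top {k : ℕ} (M : Matrix (Fin k) (Fin k) ℂ)
    (h : Submodule.span ℂ (Set.range Mᵀ) = ⊤) : M.rank = k := by
  rw [Matrix.rank_eq_finrank_span_cols]
  change Module.finrank ℂ (Submodule.span ℂ (Set.range Mᵀ)) = k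
  rw [h, finrank_top, Module.finrank_fin_fun]

/-- embedding of `ℂⁿ` into `ℂⁿ⁺¹` prepending a zero. -/
noncomputable def Emb (n : ℕ) : (Fin n → ℂ) →ₗ[ℂ] (Fin (n + 1) → ℂ) where
  toFun y := Fin.cons 0 y
  map_add' x y := by
    funext i; refine Fin.cases ?_ (fun i => ?_) i <;> simp
  map_smul' c y := by
    funext i; refine Fin.cases ?_ (fun i => ?_) i <;> simp

/-- `(A, b)` is controllable: the Krylov matrix `[b, Ab, …, Aᵏ⁻¹b]` has rank `k`. -/
def ControllableVec {k : ℕ} (A : Matrix (Fin k) (Fin k) ℂ) (b : Fin k → ℂ) : Prop :=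
  (Matrix.of fun i j : Fin k => ((A ^ (j : ℕ)).mulVec b) i).rank = k

theorem stmt_8 (n : ℕ) (A : Matrix (Fin (n + 1)) (Fin (n + 1)) ℂ)
    (A22 : Matrix (Fin n) (Fin n) ℂ) (b₁ b₂ : Fin n → ℂ) (τ : ℂ) (hτ : τ ≠ 0)
    (hA00 : A 0 0 = 0)
    (hArow : ∀ j : Fin n, A 0 j.succ = b₂ j)
    (hAcol : ∀ i : Fin n, A i.succ 0 = b₁ i)
    (hA22 : ∀ i j : Fin n, A i.succ j.succ = A22 i j)
    (B : Fin (n + 1) → ℂ) (hB0 : B 0 = τ) (hBrest : ∀ i : Fin n, B i.succ = 0)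
    (hctrb : ControllableVec A22 b₁) :
    ControllableVec A B := by
  set c : ℕ → Fin (n + 1) → ℂ := fun j => (A ^ j) *ᵥ B with hc
  set v : ℕ → Fin n → ℂ := fun j i => c j i.succ with hvdef
  set u : ℕ → Fin n → ℂ := fun j => (A22 ^ j) *ᵥ b₁ with hu
  set M : Matrix (Fin (n + 1)) (Fin (n + 1)) ℂ :=
    Matrix.of fun i j : Fin (n + 1) => ((A ^ (j : ℕ)).mulVec B) i with hM
  set S : Submodule ℂ (Fin (n + 1) → ℂ) := Submodule.span ℂ (Set.range Mᵀ) with hS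
  set E := Emb n with hE
  have hEapp : ∀ (y : Fin n → ℂ), E y = Fin.cons 0 y := fun y => rfl
  -- basic facts
  have hc0 : c 0 = B := by simp [hc]
  have hcsucc : ∀ j, c (j + 1) = A *ᵥ c j := by
    intro j
    simp only [hc, pow_succ', ← mulVec_mulVec]
  have hcmem : ∀ j : ℕ, j ≤ n → c j ∈ S := by
    intro j hj
    exact Submodule.subset_span ⟨⟨j, Nat.lt_succ_of_le hj⟩, rfl⟩
  have hBmem : B ∈ S := hc0 ▸ hcmem 0 (Nat.zero_le n)
  have hv : ∀ j, v (j + 1) = c j 0 • b₁ + A22 *ᵥ v j := by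
    intro j
    funext i
    show c (j + 1) i.succ = _
    rw [hcsucc]
    simp [mulVec, dotProduct, Fin.sum_univ_succ, hAcol, hA22, mul_comm]
    rfl
  have hv0 : v 0 = 0 := by
    funext i
    show c 0 i.succ = 0
    rw [hc0]; exact hBrest i
  have hu0 : u 0 = b₁ := by simp [hu]
  have husucc : ∀ j, u (j + 1) = A22 *ᵥ u j := by
    intro j; simp only [hu, pow_succ', ← mulVec_mulVec]
  -- E (v j) ∈ S for j ≤ n
  have hw : ∀ j : ℕ, j ≤ n → E (v j) ∈ S := by
    intro j hj
    have heq : E (v j) = c j - (c j 0 * τ⁻¹) • B := by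
      funext i
      refine Fin.cases ?_ (fun i => ?_) i
      · rw [hEapp]
        simp [hB0]
        field_simp
        ring
      · rw [hEapp]
        simp [hBrest i]
        rfl
    rw [heq]
    exact sub_mem (hcmem j hj) (Submodule.smul_mem _ _ hBmem)
  -- recurrence remainder
  have hR : ∀ j : ℕ, v (j + 1) - τ • u j ∈ Submodule.span ℂ (u '' Set.Iio j) := by
    intro j
    induction j with
    | zero =>
      have : v 1 - τ • u 0 = 0 := by
        rw [hv 0, hv0, hu0]
        have : c 0 0 = τ := by rw [hc0, hB0]
        rw [this]
        simp
      rw [this]; exact Submodule.zero_mem _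
    | succ j ih =>
      have key : v (j + 2) - τ • u (j + 1)
          = c (j + 1) 0 • u 0 + A22 *ᵥ (v (j + 1) - τ • u j) := by
        rw [hv (j + 1), husucc j, hu0, mulVec_sub, mulVec_smul]
        abel
      rw [key]
      refine add_mem (Submodule.smul_mem _ _ (Submodule.subset_span ⟨0, Nat.succ_pos j, rfl⟩)) ?_
      have hmap := Submodule.mem_map_of_mem (f := A22.mulVecLin) ih
      rw [Submodule.map_span] at hmap
      refine Submodule.span_mono ?_ hmap
      rintro _ ⟨_, ⟨i, hi, rfl⟩, rfl⟩
      exact ⟨i + 1, Nat.succ_lt_succ hi, by rw [husucc i, Matrix.mulVecLin_apply]⟩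
  -- A22^j b₁ lands in S (after embedding)
  have hP : ∀ j, j < n → E (u j) ∈ S := by
    intro j
    induction j using Nat.strong_induction_on with
    | _ j ih =>
      intro hj
      have h1 : E (v (j + 1)) ∈ S := hw (j + 1) hj
      have h2 : E (v (j + 1) - τ • u j) ∈ S := by
        have hmap := Submodule.mem_map_of_mem (f := E) (hR j)
        rw [Submodule.map_span] at hmap
        refine Submodule.span_le.mpr ?_ hmap
        rintro _ ⟨_, ⟨i, hi, rfl⟩, rfl⟩
        exact ih i hi (hi.trans hj)
      have heq : τ • E (u j) = E (v (j + 1)) - E (v (j + 1) - τ • u j) := by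
        rw [map_sub, _root_.map_smul]; abel
      have h3 : τ • E (u j) ∈ S := heq ▸ sub_mem h1 h2
      simpa [smul_smul, inv_mul_cancel₀ hτ] using Submodule.smul_mem _ τ⁻¹ h3
  -- conclude
  show M.rank = n + 1
  apply rank_of_span_top
  rw [← hS, Submodule.eq_top_iff']
  intro x
  have hy : (fun i => x i.succ) ∈ Submodule.span ℂ (u '' Set.Iio n) := by
    have htop := span_top_of_rank _ hctrb
    have hx : (fun i => x i.succ) ∈ Submodule.span ℂ
        (Set.range (Matrix.of fun i j : Fin n => ((A22 ^ (j : ℕ)).mulVec b₁) i)ᵀ) := by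
      rw [htop]; exact Submodule.mem_top
    refine Submodule.span_mono ?_ hx
    rintro _ ⟨j, rfl⟩
    exact ⟨(j : ℕ), j.isLt, rfl⟩
  have hEy : E (fun i => x i.succ) ∈ S := by
    have hmap := Submodule.mem_map_of_mem (f := E) hy
    rw [Submodule.map_span] at hmap
    refine Submodule.span_le.mpr ?_ hmap
    rintro _ ⟨_, ⟨i, hi, rfl⟩, rfl⟩
    exact hP i hi
  have hxeq : x = (x 0 * τ⁻¹) • B + E (fun i => x i.succ) := by
    funext i
    refine Fin.cases ?_ (fun i => ?_) i
    · rw [hEapp]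
      simp [hB0]
      field_simp
    · rw [hEapp]
      simp [hBrest i]
  rw [hxeq]
  exact add_mem (Submodule.smul_mem _ _ hBmem) hEy
end
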